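/- For every f ∈ C²[0,1] and n ≥ 4, ‖K_n f − f‖_∞ ≤ (1/(2n))‖f′‖_∞ + (9/(8n))‖f″‖_∞. -/

import Mathlib

/-!
`K_n` is a positive linear operator reproducing constants. Its first two central moments at `x`
are `(1/2 - x)/(n+1)` and `((n-1)x(1-x) + 1/3)/(n+1)^2`, which follow from the Bernstein
identities `∑ p_k = 1`, `∑ (k - nx) p_k = 0` and `∑ (k - nx)^2 p_k = nx(1-x)`. Applying `K_n`
to the first-order Taylor expansion of `f` at `x`, whose remainder is at most `‖f''‖ (t - x)^2`,
bounds `|K_n f(x) - f(x)|` by `|f'(x)|` times the first moment plus `‖f''‖` times the second,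
and these moments are at most `1/(2n)` and `9/(8n)`.
-/

open MeasureTheory Set

noncomputable def kantorovich (n : ℕ) (f : ℝ → ℝ) (x : ℝ) : ℝ :=
  ((n : ℝ) + 1) * ∑ k ∈ Finset.range (n + 1),
    (n.choose k : ℝ) * x ^ k * (1 - x) ^ (n - k) *
      ∫ t in ((k : ℝ) / ((n : ℝ) + 1))..(((k : ℝ) + 1) / ((n : ℝ) + 1)), f t

noncomputable def supNorm (f : ℝ → ℝ) : ℝ :=
  sSup {y | ∃ x ∈ Icc (0:ℝ) 1, y = |f x|}

noncomputable def omega1 (f : ℝ → ℝ) (h : ℝ) : ℝ :=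
  sSup {d | ∃ s ∈ Icc (0:ℝ) 1, ∃ t ∈ Icc (0:ℝ) 1, |s - t| ≤ h ∧ d = |f s - f t|}

noncomputable def omega2 (f : ℝ → ℝ) (h : ℝ) : ℝ :=
  sSup {d | ∃ t δ : ℝ, 0 < δ ∧ δ ≤ h ∧ t - δ ∈ Icc (0:ℝ) 1 ∧ t + δ ∈ Icc (0:ℝ) 1 ∧
    d = |f (t + δ) - 2 * f t + f (t - δ)|}

open Finset

namespace bernsteinPolynomial

variable {R : Type*} [CommRing R] (n : ℕ) (x : R)

theorem sum_eval :
    ∑ k ∈ range (n + 1), (n.choose k : R) * x ^ k * (1 - x) ^ (n - k) = 1 := by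
  simpa [bernsteinPolynomial, Polynomial.eval_finsetSum] using
    congrArg (Polynomial.eval x) (bernsteinPolynomial.sum R n)

theorem sum_sub_mul_eval :
    ∑ k ∈ range (n + 1), ((k : R) - n * x) * ((n.choose k : R) * x ^ k * (1 - x) ^ (n - k))
      = 0 := by
  have h := congrArg (Polynomial.eval x) (bernsteinPolynomial.sum_smul R n)
  simp only [Polynomial.eval_finsetSum, bernsteinPolynomial,
    Polynomial.eval_mul, Polynomial.eval_pow, Polynomial.eval_natCast, Polynomial.eval_X,
    Polynomial.eval_sub, Polynomial.eval_one, nsmul_eq_mul] at h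
  simp only [sub_mul, sum_sub_distrib, ← mul_sum, sum_eval, h]
  ring

theorem sum_sub_sq_mul_eval :
    ∑ k ∈ range (n + 1), ((k : R) - n * x) ^ 2 * ((n.choose k : R) * x ^ k * (1 - x) ^ (n - k))
      = n * x * (1 - x) := by
  have h := congrArg (Polynomial.eval x) (bernsteinPolynomial.variance R n)
  simp only [Polynomial.eval_finsetSum, bernsteinPolynomial,
    Polynomial.eval_mul, Polynomial.eval_pow, Polynomial.eval_natCast, Polynomial.eval_X,
    Polynomial.eval_sub, Polynomial.eval_one, nsmul_eq_mul] at h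
  rw [← h]
  refine sum_congr rfl fun k _ => by ring

end bernsteinPolynomial

theorem intervalIntegral.integral_sub_pow (a b x : ℝ) (m : ℕ) :
    ∫ t in a..b, (t - x) ^ m = ((b - x) ^ (m + 1) - (a - x) ^ (m + 1)) / (m + 1) := by
  rw [intervalIntegral.integral_comp_sub_right (fun t => t ^ m), integral_pow]

theorem Convex.abs_sub_sub_mul_le {s : Set ℝ} (hs : Convex ℝ s) {f f' f'' : ℝ → ℝ} {M : ℝ}
    (hf : ∀ y ∈ s, HasDerivWithinAt f (f' y) s y) (hf' : ∀ y ∈ s, HasDerivWithinAt f' (f'' y) s y)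
    (hM : ∀ y ∈ s, |f'' y| ≤ M) {x t : ℝ} (hx : x ∈ s) (ht : t ∈ s) :
    |f t - f x - f' x * (t - x)| ≤ M * (t - x) ^ 2 := by
  have hxt : uIcc x t ⊆ s := hs.ordConnected.uIcc_subset hx ht
  have lip : ∀ y ∈ uIcc x t, ‖f' y - f' x‖ ≤ M * |t - x| := fun y hy =>
    (hs.norm_image_sub_le_of_norm_hasDerivWithin_le hf' hM hx (hxt hy)).trans
      (mul_le_mul_of_nonneg_left (abs_sub_left_of_mem_uIcc hy) ((abs_nonneg _).trans (hM x hx)))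
  have hg : ∀ y ∈ uIcc x t,
      HasDerivWithinAt (fun y => f y - f' x * y) (f' y - f' x) (uIcc x t) y := fun y hy =>
    ((hf y (hxt hy)).mono hxt).sub (by simpa using (hasDerivWithinAt_id y _).const_mul (f' x))
  have := (convex_uIcc x t).norm_image_sub_le_of_norm_hasDerivWithin_le hg lip
    left_mem_uIcc right_mem_uIcc
  rw [Real.norm_eq_abs, Real.norm_eq_abs] at this
  calc |f t - f x - f' x * (t - x)| = |(f t - f' x * t) - (f x - f' x * x)| := by ring_nf
    _ ≤ M * |t - x| * |t - x| := this
    _ = M * (t - x) ^ 2 := by rw [mul_assoc, abs_mul_abs_self, sq]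

section Kantorovich

variable {n : ℕ} {k : ℕ}

theorem kantorovich_cell_subset (hk : k ∈ range (n + 1)) :
    Icc ((k : ℝ) / ((n : ℝ) + 1)) (((k : ℝ) + 1) / ((n : ℝ) + 1)) ⊆ Icc (0 : ℝ) 1 := by
  have hk' : (k : ℝ) + 1 ≤ n + 1 := by exact_mod_cast mem_range.1 hk
  exact Icc_subset_Icc (by positivity) ((div_le_one (by positivity)).2 hk')

theorem intervalIntegrable_kantorovich_cell {g : ℝ → ℝ}
    (hg : IntegrableOn g (Icc (0 : ℝ) 1)) (hk : k ∈ range (n + 1)) :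
    IntervalIntegrable g volume ((k : ℝ) / ((n : ℝ) + 1)) (((k : ℝ) + 1) / ((n : ℝ) + 1)) :=
  (intervalIntegrable_iff_integrableOn_Icc_of_le (by gcongr; linarith)).2
    (hg.mono_set (kantorovich_cell_subset hk))

variable (n) {f g : ℝ → ℝ} (x : ℝ)

theorem kantorovich_add (hf : IntegrableOn f (Icc (0 : ℝ) 1))
    (hg : IntegrableOn g (Icc (0 : ℝ) 1)) :
    kantorovich n (fun t => f t + g t) x = kantorovich n f x + kantorovich n g x := by
  simp only [kantorovich, ← mul_add, ← sum_add_distrib]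
  congr 1
  refine sum_congr rfl fun k hk => ?_
  rw [intervalIntegral.integral_add (intervalIntegrable_kantorovich_cell hf hk)
    (intervalIntegrable_kantorovich_cell hg hk), mul_add]

theorem kantorovich_const_mul (c : ℝ) :
    kantorovich n (fun t => c * g t) x = c * kantorovich n g x := by
  simp only [kantorovich, intervalIntegral.integral_const_mul, mul_sum]
  refine sum_congr rfl fun k _ => by ring

theorem kantorovich_const (c : ℝ) : kantorovich n (fun _ => c) x = c := by
  have hn : (n : ℝ) + 1 ≠ 0 := by positivity
  simp only [kantorovich, intervalIntegral.integral_const, smul_eq_mul]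
  calc ((n : ℝ) + 1) * ∑ k ∈ range (n + 1), (n.choose k : ℝ) * x ^ k * (1 - x) ^ (n - k) *
        (((k + 1) / (n + 1) - k / (n + 1)) * c)
      = c * ∑ k ∈ range (n + 1), (n.choose k : ℝ) * x ^ k * (1 - x) ^ (n - k) := by
        rw [mul_sum, mul_sum]
        refine sum_congr rfl fun k _ => by field_simp; ring
    _ = c := by rw [bernsteinPolynomial.sum_eval, mul_one]

theorem kantorovich_sub_self :
    kantorovich n (fun t => t - x) x = (1 / 2 - x) / (n + 1) := by
  have hn : (n : ℝ) + 1 ≠ 0 := by positivity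
  have cell (k : ℕ) : ∫ t in (k : ℝ) / (n + 1)..((k : ℝ) + 1) / (n + 1), (t - x)
      = (((k : ℝ) - n * x) + (1 / 2 - x)) / (n + 1) ^ 2 := by
    have h := intervalIntegral.integral_sub_pow ((k : ℝ) / (n + 1)) ((k + 1) / (n + 1)) x 1
    simp only [pow_one] at h
    rw [h]
    push_cast
    field_simp
    ring
  calc kantorovich n (fun t => t - x) x
      = ((n : ℝ) + 1) * ∑ k ∈ range (n + 1), (1 / (n + 1) ^ 2 *
          (((k : ℝ) - n * x) * ((n.choose k : ℝ) * x ^ k * (1 - x) ^ (n - k)))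
        + (1 / 2 - x) / (n + 1) ^ 2 * ((n.choose k : ℝ) * x ^ k * (1 - x) ^ (n - k))) := by
        simp only [kantorovich, cell]
        congr 1
        refine sum_congr rfl fun k _ => by ring
    _ = (1 / 2 - x) / (n + 1) := by
        rw [sum_add_distrib, ← mul_sum, ← mul_sum, bernsteinPolynomial.sum_sub_mul_eval,
          bernsteinPolynomial.sum_eval]
        field_simp
        ring

theorem kantorovich_sub_self_sq :
    kantorovich n (fun t => (t - x) ^ 2) x = ((n - 1) * x * (1 - x) + 1 / 3) / (n + 1) ^ 2 := by
  have hn : (n : ℝ) + 1 ≠ 0 := by positivity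
  have cell (k : ℕ) : ∫ t in (k : ℝ) / (n + 1)..((k : ℝ) + 1) / (n + 1), (t - x) ^ 2
      = (((k : ℝ) - n * x) ^ 2 + (1 - 2 * x) * ((k : ℝ) - n * x) + (x ^ 2 - x + 1 / 3))
        / (n + 1) ^ 3 := by
    rw [intervalIntegral.integral_sub_pow]
    push_cast
    field_simp
    ring
  calc kantorovich n (fun t => (t - x) ^ 2) x
      = ((n : ℝ) + 1) * ∑ k ∈ range (n + 1), (1 / (n + 1) ^ 3 *
          (((k : ℝ) - n * x) ^ 2 * ((n.choose k : ℝ) * x ^ k * (1 - x) ^ (n - k)))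
        + (1 - 2 * x) / (n + 1) ^ 3 *
          (((k : ℝ) - n * x) * ((n.choose k : ℝ) * x ^ k * (1 - x) ^ (n - k)))
        + (x ^ 2 - x + 1 / 3) / (n + 1) ^ 3 *
          ((n.choose k : ℝ) * x ^ k * (1 - x) ^ (n - k))) := by
        simp only [kantorovich, cell]
        congr 1
        refine sum_congr rfl fun k _ => by ring
    _ = ((n - 1) * x * (1 - x) + 1 / 3) / (n + 1) ^ 2 := by
        rw [sum_add_distrib, sum_add_distrib, ← mul_sum, ← mul_sum, ← mul_sum,
          bernsteinPolynomial.sum_sub_sq_mul_eval, bernsteinPolynomial.sum_sub_mul_eval,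
          bernsteinPolynomial.sum_eval]
        field_simp
        ring

theorem abs_kantorovich_le {h : ℝ → ℝ} (hx : x ∈ Icc (0 : ℝ) 1)
    (hh : IntegrableOn h (Icc (0 : ℝ) 1)) (hgh : ∀ t ∈ Icc (0 : ℝ) 1, |g t| ≤ h t) :
    |kantorovich n g x| ≤ kantorovich n h x := by
  unfold kantorovich
  rw [abs_mul, abs_of_pos (by positivity)]
  gcongr
  refine (abs_sum_le_sum_abs _ _).trans (sum_le_sum fun k hk => ?_)
  have hp : 0 ≤ (n.choose k : ℝ) * x ^ k * (1 - x) ^ (n - k) := by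
    have := hx.1; have := sub_nonneg.2 hx.2; positivity
  rw [abs_mul, abs_of_nonneg hp]
  gcongr
  exact intervalIntegral.norm_integral_le_of_norm_le (f := g) (by gcongr; linarith)
    (Filter.Eventually.of_forall fun t ht =>
      hgh t (kantorovich_cell_subset hk (Ioc_subset_Icc_self ht)))
    (intervalIntegrable_kantorovich_cell hh hk)

theorem kantorovich_sub_eq (hf : IntegrableOn f (Icc (0 : ℝ) 1)) (a b : ℝ) :
    kantorovich n f x - a
      = b * ((1 / 2 - x) / (n + 1)) + kantorovich n (fun t => f t - a - b * (t - x)) x := by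
  have hconst : IntegrableOn (fun _ => a) (Icc (0 : ℝ) 1) :=
    continuous_const.integrableOn_Icc
  have hlin : IntegrableOn (fun t => b * (t - x)) (Icc (0 : ℝ) 1) :=
    (by fun_prop : Continuous fun t => b * (t - x)).integrableOn_Icc
  have hrem : IntegrableOn (fun t => f t - a - b * (t - x)) (Icc (0 : ℝ) 1) :=
    (hf.sub hconst).sub hlin
  calc kantorovich n f x - a
      = kantorovich n (fun t => a + (b * (t - x) + (f t - a - b * (t - x)))) x - a := by
        ring_nf
    _ = _ := by
      rw [kantorovich_add n x (g := fun t => b * (t - x) + (f t - a - b * (t - x))) hconst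
          (hlin.add hrem), kantorovich_add n x hlin hrem,
        kantorovich_const, kantorovich_const_mul, kantorovich_sub_self]
      ring

theorem abs_kantorovich_sub_le (hf : IntegrableOn f (Icc (0 : ℝ) 1)) (hx : x ∈ Icc (0 : ℝ) 1)
    {d M : ℝ} (hR : ∀ t ∈ Icc (0 : ℝ) 1, |f t - f x - d * (t - x)| ≤ M * (t - x) ^ 2) :
    |kantorovich n f x - f x|
      ≤ |d| * (|1 / 2 - x| / (n + 1)) + M * (((n - 1) * x * (1 - x) + 1 / 3) / (n + 1) ^ 2) := by
  have hsq : IntegrableOn (fun t => M * (t - x) ^ 2) (Icc (0 : ℝ) 1) :=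
    (by fun_prop : Continuous fun t => M * (t - x) ^ 2).integrableOn_Icc
  rw [kantorovich_sub_eq n x hf (f x) d]
  calc _ ≤ |d * ((1 / 2 - x) / (n + 1))| + |kantorovich n (fun t => f t - f x - d * (t - x)) x| :=
        abs_add_le _ _
    _ ≤ |d| * (|1 / 2 - x| / (n + 1)) + kantorovich n (fun t => M * (t - x) ^ 2) x := by
        rw [abs_mul, abs_div, abs_of_pos (by positivity : (0 : ℝ) < n + 1)]
        exact add_le_add_right (abs_kantorovich_le n x hx hsq hR) _
    _ = _ := by rw [kantorovich_const_mul, kantorovich_sub_self_sq]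

end Kantorovich

theorem supNorm_nonneg (g : ℝ → ℝ) : 0 ≤ supNorm g :=
  Real.sSup_nonneg (by rintro _ ⟨x, -, rfl⟩; exact abs_nonneg _)

theorem abs_le_supNorm {g : ℝ → ℝ} (hg : ContinuousOn g (Icc (0 : ℝ) 1)) {x : ℝ}
    (hx : x ∈ Icc (0 : ℝ) 1) : |g x| ≤ supNorm g := by
  obtain ⟨C, hC⟩ := isCompact_Icc.bddAbove_image hg.abs
  exact le_csSup ⟨C, by rintro _ ⟨y, hy, rfl⟩; exact hC ⟨y, hy, rfl⟩⟩ ⟨x, hx, rfl⟩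

theorem supNorm_le {g : ℝ → ℝ} {C : ℝ} (h : ∀ x ∈ Icc (0 : ℝ) 1, |g x| ≤ C) : supNorm g ≤ C :=
  csSup_le ⟨_, 0, left_mem_Icc.2 zero_le_one, rfl⟩ (by rintro _ ⟨x, hx, rfl⟩; exact h x hx)

theorem kantorovich_error_C2 (f : ℝ → ℝ) (hf : ContDiffOn ℝ 2 f (Icc (0:ℝ) 1))
    (n : ℕ) (hn : 4 ≤ n) :
    supNorm (fun x => kantorovich n f x - f x)
      ≤ 1 / (2 * (n : ℝ)) * supNorm (derivWithin f (Icc (0:ℝ) 1))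
        + 9 / (8 * (n : ℝ)) * supNorm (derivWithin (derivWithin f (Icc (0:ℝ) 1)) (Icc (0:ℝ) 1)) := by
  set s := Icc (0 : ℝ) 1
  have hs : UniqueDiffOn ℝ s := uniqueDiffOn_Icc one_pos
  have hf₁ : ContDiffOn ℝ 1 (derivWithin f s) s := hf.derivWithin hs (by norm_num)
  have hd : ∀ y ∈ s, HasDerivWithinAt f (derivWithin f s y) s y := fun y hy =>
    (hf.differentiableOn (by norm_num) y hy).hasDerivWithinAt
  have hd₁ : ∀ y ∈ s,
      HasDerivWithinAt (derivWithin f s) (derivWithin (derivWithin f s) s y) s y := fun y hy =>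
    (hf₁.differentiableOn one_ne_zero y hy).hasDerivWithinAt
  have hM₂ : ∀ y ∈ s, |derivWithin (derivWithin f s) s y| ≤ _ := fun y hy =>
    abs_le_supNorm (hf₁.continuousOn_derivWithin hs le_rfl) hy
  have hN : (4 : ℝ) ≤ n := by exact_mod_cast hn
  refine supNorm_le fun x hx => ?_
  have hx' : x * (1 - x) ≤ 1 / 4 := by nlinarith [sq_nonneg (2 * x - 1)]
  have hmoment₁ : |1 / 2 - x| / (n + 1) ≤ 1 / (2 * n) := by
    rw [div_le_div_iff₀ (by positivity) (by positivity)]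
    nlinarith [abs_le.2 (⟨by linarith [hx.2], by linarith [hx.1]⟩ : -(1 / 2) ≤ 1 / 2 - x ∧ _)]
  have hmoment₂ : ((n - 1) * x * (1 - x) + 1 / 3) / (n + 1) ^ 2 ≤ 9 / (8 * n) := by
    rw [div_le_div_iff₀ (by positivity) (by positivity)]
    nlinarith [mul_le_mul_of_nonneg_left hx'
      (mul_nonneg (by linarith : (0 : ℝ) ≤ n - 1) (by linarith : (0 : ℝ) ≤ 8 * n))]
  calc |kantorovich n f x - f x|
      ≤ |derivWithin f s x| * (|1 / 2 - x| / (n + 1)) + supNorm (derivWithin (derivWithin f s) s)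
          * (((n - 1) * x * (1 - x) + 1 / 3) / (n + 1) ^ 2) :=
        abs_kantorovich_sub_le n x hf.continuousOn.integrableOn_Icc hx fun t ht =>
          (convex_Icc 0 1).abs_sub_sub_mul_le hd hd₁ hM₂ hx ht
    _ ≤ supNorm (derivWithin f s) * (1 / (2 * n))
        + supNorm (derivWithin (derivWithin f s) s) * (9 / (8 * n)) := by
        gcongr
        · exact supNorm_nonneg _
        · exact abs_le_supNorm hf₁.continuousOn hx
        · exact supNorm_nonneg _
    _ = _ := by ring
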